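/- arXiv:2211.12598 — 2 statements merged into one kernel-verified Lean document; each statement's English description precedes it below -/
import Mathlib

section
/- Let T > 0, let Ω ⊆ (−T,T) be a measurable subset of ℝ with B = sup_{x∈Ω}|x| < T, let N be a positive integer, τ > 0, and let φ(r) = exp(−r²). Let f ∈ L²(Ω), let g ∈ L²(ℝ) be any function with g = f almost everywhere on Ω, and let λ = (λ_n)_{n∈ℤ} ∈ ℓ²(ℤ), with h = Σ_{n∈ℤ} λ_n √ε φ(ε(· − nT/N)) ∈ L²(ℝ). If ε ≥ (1/(√2 (T − B))) · sqrt( log( √(2π) B N / (T τ²) ) ), then E_{N,τ}(f) ≤ ‖g − h‖_{L²(ℝ)} + 2τ ‖λ‖_{ℓ²}. -/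
open MeasureTheory Real Filter

/-- The normalized Gaussian radial basis function translate `x ↦ √ε · exp(−(ε(x−ξ))²)`. -/
noncomputable def gaussTrans (ε ξ x : ℝ) : ℝ := Real.sqrt ε * Real.exp (-(ε * (x - ξ))^2)

/-- The RBF approximant `x ↦ Σ_{n=−N}^{N} z_n √ε φ(ε(x − nT/N))` with coefficients
`z` indexed by `Fin (2N+1)` (index `n` corresponds to the center `(n−N)T/N`). -/
noncomputable def rbfSum (T ε : ℝ) (N : ℕ) (z : EuclideanSpace ℂ (Fin (2*N+1))) (x : ℝ) : ℂ :=
  ∑ n : Fin (2*N+1), z n * ((gaussTrans ε ((((n : ℕ) : ℤ) - (N : ℤ)) * T / N) x : ℝ) : ℂ)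

/-- The regularized best-approximation quantity
`E_{N,τ}(f) = inf_z ( ‖f − Σ z_n √ε φ(ε(·−nT/N))‖_{L²(Ω)} + τ‖z‖_{ℓ²} )`. -/
noncomputable def Eapprox (T ε τ : ℝ) (N : ℕ) (Ω : Set ℝ) (f : ℝ → ℂ) : ℝ :=
  ⨅ z : EuclideanSpace ℂ (Fin (2*N+1)),
    ((eLpNorm (fun x => f x - rbfSum T ε N z x) 2 (volume.restrict Ω)).toReal + τ * ‖z‖)

/-- The complementary error function `erfc(z) = (2/√π) ∫_z^∞ e^{−t²} dt`. -/
noncomputable def erfc (z : ℝ) : ℝ := (2 / Real.sqrt π) * ∫ t in Set.Ioi z, Real.exp (-t^2)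

/-- The bi-infinite Gaussian series `h(x) = Σ_{n∈ℤ} λ_n √ε φ(ε(x − nT/N))`. -/
noncomputable def hfun (T ε : ℝ) (N : ℕ) (lam : lp (fun _ : ℤ => ℂ) 2) (x : ℝ) : ℂ :=
  ∑' n : ℤ, lam n * ((gaussTrans ε ((n : ℝ) * T / N) x : ℝ) : ℂ)

/-- The Fourier transform `f̂(ω) = ∫_ℝ f(x) e^{−iωx} dx`. -/
noncomputable def FT (g : ℝ → ℂ) (ω : ℝ) : ℂ :=
  ∫ x : ℝ, g x * Complex.exp (-Complex.I * (ω : ℂ) * (x : ℂ))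

/-! The competitor is the truncation `z = (λ_n)_{|n| ≤ N}`, so `τ‖z‖ ≤ τ‖λ‖`, and by the triangle
inequality on `Ω` it remains to show `‖h − s_z‖_{L²(Ω)} ≤ τ‖λ‖`. Here `h − s_z = Σ_{|n|>N} λ_n G_n`
with `G_n = √ε φ(ε(· − nT/N))`, so Cauchy–Schwarz bounds it pointwise by
`‖λ‖ (Σ_{|n|>N} G_n(x)²)^{1/2}`. For `|x| ≤ B` and `|n| > N` one has
`(x − nT/N)² ≥ (T − B)² + ((|n| − N)T/N)²`, which splits off the factor `e^{−2ε²(T−B)²}` and leaves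
two one-sided Gaussian lattice sums, each bounded by a half-line Gaussian integral. Hence
`|h − s_z|² ≤ ‖λ‖² e^{−2ε²(T−B)²} √(π/2) N / T` on `Ω`, while `|Ω| ≤ 2B`; the lower bound on `ε`
is exactly what makes `2B e^{−2ε²(T−B)²} √(π/2) N / T ≤ τ²`. -/

theorem summable_and_norm_tsum_mul_le {ι 𝕜 : Type*} [RCLike 𝕜] {a : ι → 𝕜} {w : ι → ℝ}
    (ha : Summable fun i => ‖a i‖ ^ 2) (hw : Summable fun i => w i ^ 2) :
    (Summable fun i => a i * w i) ∧
      ‖∑' i, a i * w i‖ ≤ √(∑' i, ‖a i‖ ^ 2) * √(∑' i, w i ^ 2) := by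
  have h := Real.summable_and_inner_le_Lp_mul_Lq_tsum_of_nonneg Real.HolderConjugate.two_two
    (f := fun i => ‖a i‖) (g := fun i => |w i|) (fun _ => norm_nonneg _) (fun _ => abs_nonneg _)
    (by simpa using ha) (by simpa using hw)
  simp only [Real.rpow_two, sq_abs, ← Real.sqrt_eq_rpow] at h
  have hs : Summable fun i => ‖a i * w i‖ := by simpa [norm_mul] using h.1
  exact ⟨hs.of_norm, (norm_tsum_le_tsum_norm hs).trans (by simpa [norm_mul] using h.2)⟩

theorem lp.hasSum_norm_sq {ι : Type*} {E : ι → Type*} [∀ i, NormedAddCommGroup (E i)]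
    (f : lp E 2) : HasSum (fun i => ‖f i‖ ^ 2) (‖f‖ ^ 2) := by
  simpa using lp.hasSum_norm (p := 2) (by norm_num) f

theorem hasSum_compl_Icc_natAbs {M : Type*} [AddCommMonoid M] [TopologicalSpace M]
    [ContinuousAdd M] (N : ℕ) {φ : ℕ → M} {a : M} (h : HasSum φ a) :
    HasSum (fun m : {m : ℤ // m ∉ Finset.Icc (-(N : ℤ)) N} => φ ((m : ℤ).natAbs - (N + 1)))
      (a + a) := by
  let e : ℕ ⊕ ℕ → ℤ := Sum.elim (fun k => N + 1 + k) (fun k => -(N + 1 + k))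
  have he : Function.Injective e := by
    rintro (k | k) (l | l) hkl <;> simp only [e, Sum.elim_inl, Sum.elim_inr] at hkl <;> grind
  have hrange : Set.range e = (Finset.Icc (-(N : ℤ)) N : Set ℤ)ᶜ := by
    ext m
    simp only [Set.mem_range, Set.mem_compl_iff, Finset.coe_Icc, Set.mem_Icc, Sum.exists, e,
      Sum.elim_inl, Sum.elim_inr]
    constructor
    · rintro (⟨k, rfl⟩ | ⟨k, rfl⟩) <;> omega
    · intro hm
      rcases le_or_gt 0 m with h0 | h0
      · exact Or.inl ⟨(m - N - 1).toNat, by omega⟩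
      · exact Or.inr ⟨(-m - N - 1).toNat, by omega⟩
  have hsum : HasSum ((fun m : ℤ => φ (m.natAbs - (N + 1))) ∘ e) (a + a) :=
    HasSum.sum (h.congr_fun fun k => by simp only [Function.comp, e, Sum.elim_inl]; congr 1; omega)
      (h.congr_fun fun k => by simp only [Function.comp, e, Sum.elim_inr]; congr 1; omega)
  rw [← he.hasSum_range_iff, hrange] at hsum
  exact hsum

theorem exists_hasSum_exp_neg_mul_succ_sq_le {β : ℝ} (hβ : 0 < β) :
    ∃ s, HasSum (fun k : ℕ => exp (-β * ((k : ℝ) + 1) ^ 2)) s ∧ s ≤ √(π / β) / 2 := by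
  have hpartial : ∀ K, ∑ k ∈ Finset.range K, exp (-β * ((k : ℝ) + 1) ^ 2) ≤ √(π / β) / 2 := by
    intro K
    have hanti : AntitoneOn (fun u : ℝ => exp (-β * u ^ 2)) (Set.Icc 0 (0 + K)) := by
      intro u hu v hv huv
      simp only [Set.mem_Icc] at hu
      exact exp_le_exp.2 (by nlinarith [mul_nonneg hβ.le (mul_nonneg (sub_nonneg.2 huv)
        (add_nonneg hu.1 (hu.1.trans huv)))])
    calc ∑ k ∈ Finset.range K, exp (-β * ((k : ℝ) + 1) ^ 2)
        ≤ ∫ u in (0 : ℝ)..0 + K, exp (-β * u ^ 2) := by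
          simpa using hanti.sum_le_integral
      _ ≤ ∫ u in Set.Ioi (0 : ℝ), exp (-β * u ^ 2) := by
          rw [intervalIntegral.integral_of_le (by positivity)]
          exact setIntegral_mono_set (integrable_exp_neg_mul_sq hβ).integrableOn
            (.of_forall fun _ => (exp_pos _).le) (.of_forall Set.Ioc_subset_Ioi_self)
      _ = √(π / β) / 2 := integral_gaussian_Ioi β
  have hs := summable_of_sum_range_le (fun _ => (exp_pos _).le) hpartial
  exact ⟨_, hs.hasSum, hs.tsum_le_of_sum_range_le hpartial⟩

theorem gaussTrans_sq {ε : ℝ} (hε : 0 ≤ ε) (ξ x : ℝ) :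
    gaussTrans ε ξ x ^ 2 = ε * exp (-(2 * ε ^ 2) * (x - ξ) ^ 2) := by
  rw [gaussTrans, mul_pow, sq_sqrt hε, ← exp_nat_mul]
  ring_nf

theorem sq_add_sq_le_sq_sub {x y B R : ℝ} (hx : |x| ≤ B) (hBR : B ≤ R) (hRy : R ≤ |y|) :
    (R - B) ^ 2 + (|y| - R) ^ 2 ≤ (x - y) ^ 2 := by
  have hdist : (R - B) + (|y| - R) ≤ |x - y| := by
    have := abs_sub_abs_le_abs_sub y x
    rw [abs_sub_comm] at this
    linarith
  nlinarith [sq_abs (x - y), mul_nonneg (sub_nonneg.2 hBR) (sub_nonneg.2 hRy)]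

theorem gaussTrans_sq_le_of_le_abs {ε x ξ B R : ℝ} (hε : 0 ≤ ε) (hx : |x| ≤ B) (hBR : B ≤ R)
    (hRξ : R ≤ |ξ|) :
    gaussTrans ε ξ x ^ 2 ≤
      ε * exp (-(2 * ε ^ 2) * (R - B) ^ 2) * exp (-(2 * ε ^ 2) * (|ξ| - R) ^ 2) := by
  rw [gaussTrans_sq hε, mul_assoc, ← exp_add]
  gcongr
  nlinarith [sq_add_sq_le_sq_sub hx hBR hRξ]

theorem mul_exp_neg_sq_le_one {A s : ℝ} (hA : 0 < A) (h : √(log A) ≤ s) : A * exp (-s ^ 2) ≤ 1 := by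
  have hlog : log A ≤ s ^ 2 := by
    rcases le_or_gt (log A) 0 with hneg | hpos
    · exact hneg.trans (sq_nonneg s)
    · calc log A = √(log A) ^ 2 := (sq_sqrt hpos.le).symm
        _ ≤ s ^ 2 := by gcongr
  calc A * exp (-s ^ 2) = exp (log A - s ^ 2) := by
        rw [exp_sub, exp_log hA, div_eq_mul_inv, exp_neg]
    _ ≤ 1 := exp_le_one_iff.2 (by linarith)

theorem abs_intCast_mul_div_sub_of_notMem_Icc {N : ℕ} (hN : 0 < N) {m : ℤ}
    (hm : m ∉ Finset.Icc (-(N : ℤ)) N) {T : ℝ} (hT : 0 ≤ T) :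
    |(m : ℝ) * T / N| - T = (((m.natAbs - (N + 1) : ℕ) : ℝ) + 1) * (T / N) := by
  have hmN : N + 1 ≤ m.natAbs := by simp only [Finset.mem_Icc, not_and_or, not_le] at hm; omega
  have hNR : (0 : ℝ) < N := by exact_mod_cast hN
  have hmabs : ((m.natAbs : ℕ) : ℝ) = |(m : ℝ)| := by rw [Nat.cast_natAbs, Int.cast_abs]
  rw [abs_div, abs_mul, abs_of_nonneg hT, Nat.abs_cast, Nat.cast_sub hmN, hmabs]
  field_simp
  push_cast
  ring

theorem summable_and_tsum_tail_gaussTrans_sq_le {T ε B x : ℝ} {N : ℕ} (hT : 0 < T) (hN : 0 < N)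
    (hε : 0 < ε) (hx : |x| ≤ B) (hBT : B ≤ T) :
    (Summable fun m : {m : ℤ // m ∉ Finset.Icc (-(N : ℤ)) N} =>
      gaussTrans ε ((m : ℝ) * T / N) x ^ 2) ∧
    ∑' m : {m : ℤ // m ∉ Finset.Icc (-(N : ℤ)) N}, gaussTrans ε ((m : ℝ) * T / N) x ^ 2 ≤
      ε * exp (-(2 * ε ^ 2) * (T - B) ^ 2) * √(π / (2 * ε ^ 2 * (T / N) ^ 2)) := by
  have hβ : 0 < 2 * ε ^ 2 * (T / N) ^ 2 := by positivity
  obtain ⟨s, hs, hsle⟩ := exists_hasSum_exp_neg_mul_succ_sq_le hβ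
  have hmaj := (hasSum_compl_Icc_natAbs N hs).mul_left (ε * exp (-(2 * ε ^ 2) * (T - B) ^ 2))
  have hle : ∀ m : {m : ℤ // m ∉ Finset.Icc (-(N : ℤ)) N}, gaussTrans ε ((m : ℝ) * T / N) x ^ 2 ≤
      ε * exp (-(2 * ε ^ 2) * (T - B) ^ 2) *
        exp (-(2 * ε ^ 2 * (T / N) ^ 2) * ((((m : ℤ).natAbs - (N + 1) : ℕ) : ℝ) + 1) ^ 2) := by
    intro m
    have hgap := abs_intCast_mul_div_sub_of_notMem_Icc hN m.2 hT.le
    have hgap_nonneg : 0 ≤ (((m : ℤ).natAbs - (N + 1) : ℕ) + 1 : ℝ) * (T / N) := by positivity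
    convert gaussTrans_sq_le_of_le_abs hε.le hx hBT (R := T) (by linarith) using 3
    rw [hgap]
    ring
  have hsum := hmaj.summable.of_nonneg_of_le (fun _ => sq_nonneg _) hle
  refine ⟨hsum, (hasSum_le hle hsum.hasSum hmaj).trans ?_⟩
  gcongr
  linarith

def truncCoeffs (N : ℕ) (lam : lp (fun _ : ℤ => ℂ) 2) : EuclideanSpace ℂ (Fin (2 * N + 1)) :=
  WithLp.toLp 2 fun n => lam ((n : ℤ) - N)

theorem norm_truncCoeffs_le (N : ℕ) (lam : lp (fun _ : ℤ => ℂ) 2) :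
    ‖truncCoeffs N lam‖ ≤ ‖lam‖ := by
  have hinj : Function.Injective fun n : Fin (2 * N + 1) => (n : ℤ) - N := by
    intro a b hab
    simp only [sub_left_inj, Nat.cast_inj] at hab
    exact Fin.ext hab
  have hsq : ‖truncCoeffs N lam‖ ^ 2 ≤ ‖lam‖ ^ 2 := by
    rw [EuclideanSpace.norm_sq_eq, ← (lp.hasSum_norm_sq lam).tsum_eq,
      ← tsum_fintype (L := .unconditional _)]
    exact tsum_comp_le_tsum_of_inj (lp.hasSum_norm_sq lam).summable (fun _ => sq_nonneg _) hinj
  exact (pow_le_pow_iff_left₀ (norm_nonneg _) (norm_nonneg _) two_ne_zero).1 hsq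

theorem rbfSum_truncCoeffs (T ε : ℝ) (N : ℕ) (lam : lp (fun _ : ℤ => ℂ) 2) (x : ℝ) :
    rbfSum T ε N (truncCoeffs N lam) x =
      ∑ m ∈ Finset.Icc (-(N : ℤ)) N, lam m * (gaussTrans ε ((m : ℝ) * T / N) x : ℂ) := by
  refine Finset.sum_bij' (fun n _ => (n : ℤ) - N)
    (fun m hm => ⟨(m + N).toNat, by have := Finset.mem_Icc.1 hm; omega⟩)
    (fun n _ => by have := n.isLt; simp only [Finset.mem_Icc]; omega)
    (fun _ _ => Finset.mem_univ _) (fun n _ => by simp)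
    (fun m hm => by have := Finset.mem_Icc.1 hm; simp; omega) (fun n _ => ?_)
  simp [truncCoeffs]

theorem norm_hfun_sub_rbfSum_truncCoeffs_le {T ε B x : ℝ} {N : ℕ} (hT : 0 < T) (hN : 0 < N)
    (hε : 0 < ε) (hx : |x| ≤ B) (hBT : B ≤ T) (lam : lp (fun _ : ℤ => ℂ) 2) :
    ‖hfun T ε N lam x - rbfSum T ε N (truncCoeffs N lam) x‖ ≤
      ‖lam‖ * √(ε * exp (-(2 * ε ^ 2) * (T - B) ^ 2) * √(π / (2 * ε ^ 2 * (T / N) ^ 2))) := by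
  obtain ⟨hsumG, htailG⟩ := summable_and_tsum_tail_gaussTrans_sq_le hT hN hε hx hBT
  have hlam := lp.hasSum_norm_sq lam
  have hlam' : Summable fun m : {m : ℤ // m ∉ Finset.Icc (-(N : ℤ)) N} => ‖lam m‖ ^ 2 :=
    hlam.summable.subtype _
  obtain ⟨hsum, hcs⟩ := summable_and_norm_tsum_mul_le hlam' hsumG
  have hfull : Summable fun m : ℤ => lam m * (gaussTrans ε ((m : ℝ) * T / N) x : ℂ) :=
    (Finset.summable_compl_iff _).1 hsum
  rw [hfun, rbfSum_truncCoeffs, ← hfull.sum_add_tsum_compl, add_sub_cancel_left]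
  refine hcs.trans (mul_le_mul ?_ (sqrt_le_sqrt htailG) (sqrt_nonneg _) (norm_nonneg _))
  calc √(∑' m : {m : ℤ // m ∉ Finset.Icc (-(N : ℤ)) N}, ‖lam m‖ ^ 2)
      ≤ √(‖lam‖ ^ 2) := by
        rw [← hlam.tsum_eq]
        exact sqrt_le_sqrt (hlam.summable.tsum_subtype_le _ _ fun _ => sq_nonneg _)
    _ = ‖lam‖ := sqrt_sq (norm_nonneg _)

theorem eLpNorm_restrict_le_of_norm_le {E : Type*} [NormedAddCommGroup E] {u : ℝ → E}
    {Ω : Set ℝ} (hΩ : MeasurableSet Ω) {B C : ℝ} (hB : 0 ≤ B) (hΩB : ∀ x ∈ Ω, |x| ≤ B)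
    (hC : ∀ x ∈ Ω, ‖u x‖ ≤ C) :
    eLpNorm u 2 (volume.restrict Ω) ≤ ENNReal.ofReal (√(2 * B) * C) := by
  have hvol : volume Ω ≤ ENNReal.ofReal (2 * B) :=
    calc volume Ω ≤ volume (Set.Icc (-B) B) := measure_mono fun x hx => abs_le.1 (hΩB x hx)
      _ = ENNReal.ofReal (2 * B) := by rw [Real.volume_Icc]; ring_nf
  calc eLpNorm u 2 (volume.restrict Ω)
      ≤ volume.restrict Ω Set.univ ^ (2 : ENNReal).toReal⁻¹ * ENNReal.ofReal C :=
        eLpNorm_le_of_ae_bound ((ae_restrict_iff' hΩ).2 (.of_forall hC))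
    _ ≤ ENNReal.ofReal (2 * B) ^ (1 / 2 : ℝ) * ENNReal.ofReal C := by
        rw [Measure.restrict_apply_univ, ENNReal.toReal_ofNat, ← one_div]
        gcongr
    _ = ENNReal.ofReal (√(2 * B) * C) := by
        rw [ENNReal.ofReal_rpow_of_nonneg (by positivity) (by norm_num), ← sqrt_eq_rpow,
          ENNReal.ofReal_mul (sqrt_nonneg _)]

theorem eLpNorm_restrict_sub_le {E : Type*} [NormedAddCommGroup E] {μ : Measure ℝ} {Ω : Set ℝ}
    {p : ENNReal} (hp : 1 ≤ p) {f g h s : ℝ → E} (hgf : ∀ᵐ x ∂μ.restrict Ω, g x = f x)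
    (hg : AEStronglyMeasurable g μ) (hh : AEStronglyMeasurable h μ)
    (hs : AEStronglyMeasurable s (μ.restrict Ω)) :
    eLpNorm (fun x => f x - s x) p (μ.restrict Ω) ≤
      eLpNorm (fun x => g x - h x) p μ + eLpNorm (fun x => h x - s x) p (μ.restrict Ω) :=
  calc eLpNorm (fun x => f x - s x) p (μ.restrict Ω)
      = eLpNorm ((fun x => g x - h x) + fun x => h x - s x) p (μ.restrict Ω) :=
        eLpNorm_congr_ae (by filter_upwards [hgf] with x hx; simp [hx])
    _ ≤ eLpNorm (fun x => g x - h x) p (μ.restrict Ω) +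
          eLpNorm (fun x => h x - s x) p (μ.restrict Ω) :=
        eLpNorm_add_le (hg.restrict.sub hh.restrict) (hh.restrict.sub hs) hp
    _ ≤ _ := by gcongr; exact Measure.restrict_le_self

theorem Eapprox_le_of_eLpNorm_le {T ε τ : ℝ} {N : ℕ} {Ω : Set ℝ} {f : ℝ → ℂ} (hτ : 0 ≤ τ)
    {z : EuclideanSpace ℂ (Fin (2 * N + 1))} {Y : ENNReal} {r : ℝ} (hY : Y ≠ ⊤) (hr : 0 ≤ r)
    (h : eLpNorm (fun x => f x - rbfSum T ε N z x) 2 (volume.restrict Ω) ≤ Y + ENNReal.ofReal r) :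
    Eapprox T ε τ N Ω f ≤ Y.toReal + r + τ * ‖z‖ := by
  refine (ciInf_le ⟨0, by rintro _ ⟨w, rfl⟩; positivity⟩ z).trans ?_
  gcongr
  rw [← ENNReal.toReal_ofReal hr, ← ENNReal.toReal_add hY ENNReal.ofReal_ne_top]
  exact ENNReal.toReal_mono (by finiteness) h

theorem two_mul_gaussTail_le_sq {T B ε τ : ℝ} {N : ℕ} (hT : 0 < T) (hB0 : 0 < B) (hBT : B < T)
    (hN : 0 < N) (hε : 0 < ε) (hτ : 0 < τ)
    (hεge : (1 / (√2 * (T - B))) * √(log (√(2 * π) * B * N / (T * τ ^ 2))) ≤ ε) :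
    2 * B * (ε * exp (-(2 * ε ^ 2) * (T - B) ^ 2) * √(π / (2 * ε ^ 2 * (T / N) ^ 2))) ≤ τ ^ 2 := by
  set A := √(2 * π) * B * N / (T * τ ^ 2) with hAdef
  have hA : 0 < A := by positivity
  have hs : √(log A) ≤ √2 * (T - B) * ε := by
    rwa [one_div, inv_mul_le_iff₀ (by nlinarith [sqrt_pos.2 two_pos])] at hεge
  have hsqrt : √(π / (2 * ε ^ 2 * (T / N) ^ 2)) = √(2 * π) * N / (2 * ε * T) := by
    rw [sqrt_eq_iff_mul_self_eq_of_pos (by positivity)]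
    field_simp
    rw [sq_sqrt (by positivity)]
  calc 2 * B * (ε * exp (-(2 * ε ^ 2) * (T - B) ^ 2) * √(π / (2 * ε ^ 2 * (T / N) ^ 2)))
      = A * exp (-(√2 * (T - B) * ε) ^ 2) * τ ^ 2 := by
        rw [hsqrt, hAdef, mul_pow, mul_pow, sq_sqrt two_pos.le]
        field_simp
    _ ≤ 1 * τ ^ 2 := by gcongr; exact mul_exp_neg_sq_le_one hA hs
    _ = τ ^ 2 := one_mul _

theorem stmt_1_general (T B ε τ : ℝ) (N : ℕ) (Ω : Set ℝ) (hΩmeas : MeasurableSet Ω)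
    (hT : 0 < T)
    (hB : IsLUB ((fun x => |x|) '' Ω) B) (hB0 : 0 < B) (hBT : B < T)
    (hN : 0 < N) (hε : 0 < ε) (hτ : 0 < τ)
    (f g : ℝ → ℂ) (hg : MemLp g 2 volume)
    (hgf : ∀ᵐ x ∂(volume.restrict Ω), g x = f x)
    (lam : lp (fun _ : ℤ => ℂ) 2)
    (hh : MemLp (hfun T ε N lam) 2 volume)
    (hεge : (1 / (Real.sqrt 2 * (T - B))) *
        Real.sqrt (Real.log (Real.sqrt (2*π) * B * N / (T * τ^2))) ≤ ε) :
    Eapprox T ε τ N Ω f ≤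
      (eLpNorm (fun x => g x - hfun T ε N lam x) 2 volume).toReal + 2 * τ * ‖lam‖ := by
  set z := truncCoeffs N lam
  have hΩB : ∀ x ∈ Ω, |x| ≤ B := fun x hx => hB.1 ⟨x, hx, rfl⟩
  have htail : eLpNorm (fun x => hfun T ε N lam x - rbfSum T ε N z x) 2 (volume.restrict Ω) ≤
      ENNReal.ofReal (τ * ‖lam‖) := by
    refine (eLpNorm_restrict_le_of_norm_le hΩmeas hB0.le hΩB fun x hx =>
      norm_hfun_sub_rbfSum_truncCoeffs_le hT hN hε (hΩB x hx) hBT.le lam).trans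
      (ENNReal.ofReal_le_ofReal ?_)
    rw [mul_left_comm, ← sqrt_mul (by positivity), mul_comm τ]
    gcongr
    exact (sqrt_le_sqrt (two_mul_gaussTail_le_sq hT hB0 hBT hN hε hτ hεge)).trans_eq (sqrt_sq hτ.le)
  have hcont : Continuous (rbfSum T ε N z) := by unfold rbfSum gaussTrans; fun_prop
  have hsplit := (eLpNorm_restrict_sub_le one_le_two hgf hg.1 hh.1
    hcont.aestronglyMeasurable).trans (add_le_add le_rfl htail)
  have hfinite : eLpNorm (fun x => g x - hfun T ε N lam x) 2 volume ≠ ⊤ := (hg.sub hh).2.ne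
  calc Eapprox T ε τ N Ω f
      ≤ (eLpNorm (fun x => g x - hfun T ε N lam x) 2 volume).toReal + τ * ‖lam‖ + τ * ‖z‖ :=
        Eapprox_le_of_eLpNorm_le hτ.le hfinite (by positivity) hsplit
    _ ≤ (eLpNorm (fun x => g x - hfun T ε N lam x) 2 volume).toReal + τ * ‖lam‖ + τ * ‖lam‖ := by
        gcongr
        exact norm_truncCoeffs_le N lam
    _ = _ := by ring

/-- Lemma `lem:any_g_and_any_lambda`, second part. -/
theorem stmt_1 (T B ε τ : ℝ) (N : ℕ) (Ω : Set ℝ) (hΩmeas : MeasurableSet Ω)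
    (hT : 0 < T) (hΩ : Ω ⊆ Set.Ioo (-T) T)
    (hB : IsLUB ((fun x => |x|) '' Ω) B) (hB0 : 0 < B) (hBT : B < T)
    (hN : 0 < N) (hε : 0 < ε) (hτ : 0 < τ)
    (f g : ℝ → ℂ) (hf : MemLp f 2 (volume.restrict Ω)) (hg : MemLp g 2 volume)
    (hgf : ∀ᵐ x ∂(volume.restrict Ω), g x = f x)
    (lam : lp (fun _ : ℤ => ℂ) 2)
    (hh : MemLp (hfun T ε N lam) 2 volume)
    (hεge : (1 / (Real.sqrt 2 * (T - B))) *
        Real.sqrt (Real.log (Real.sqrt (2*π) * B * N / (T * τ^2))) ≤ ε) :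
    Eapprox T ε τ N Ω f ≤
      (eLpNorm (fun x => g x - hfun T ε N lam x) 2 volume).toReal + 2 * τ * ‖lam‖ :=
  stmt_1_general T B ε τ N Ω hΩmeas hT hB hB0 hBT hN hε hτ f g hg hgf lam hh hεge
end

section
/- Let T > 0, 0 < B < T, ε > 0, let N be a positive integer, and let Ω ⊆ [−B, B] be measurable. Then for every λ = (λ_n)_{n∈ℤ} ∈ ℓ²(ℤ), Σ_{|n| > N} |λ_n| √ε ‖exp(−ε²(· − nT/N)²)‖_{L²(Ω)} ≤ sqrt( (√(2π) B N / T) · erfc(√2 ε (T − B)) ) · ‖λ‖_{ℓ²}. -/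
/-!
For `|n| > N` the centre `ξ = nT/N` lies at distance at least `|ξ| - B ≥ T - B` from
`Ω ⊆ [-B, B]`, so the `L²(Ω)`-norm of the `n`-th Gaussian is at most `√(2B) e^{-ε²(|ξ|-B)²}`.
By Cauchy–Schwarz against `λ ∈ ℓ²` it remains to sum the squares of these bounds over `|n| > N`.
They form a Gaussian sequence decreasing in `|n|`, which the integral test dominates by
`(N/T) ∫_{T-B}^∞ e^{-2ε²t²} dt`, an `erfc` value.
-/

open MeasureTheory Real Filter

open Set

theorem tsum_mul_le_sqrt_mul_sqrt {ι : Type*} {f g : ι → ℝ} (hf : ∀ i, 0 ≤ f i) (hg : ∀ i, 0 ≤ g i)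
    (hf2 : Summable fun i => f i ^ 2) (hg2 : Summable fun i => g i ^ 2) :
    ∑' i, f i * g i ≤ √(∑' i, f i ^ 2) * √(∑' i, g i ^ 2) := by
  have := inner_le_Lp_mul_Lq_tsum_of_nonneg HolderConjugate.two_two hf hg
    (by simpa only [rpow_two] using hf2) (by simpa only [rpow_two] using hg2)
  simpa only [rpow_two, sqrt_eq_rpow, one_div] using this

namespace lp

variable {ι : Type*} {E : ι → Type*} [∀ i, NormedAddCommGroup (E i)]

theorem summable_norm_sq (f : lp E 2) : Summable fun i => ‖f i‖ ^ 2 := by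
  simpa only [ENNReal.toReal_ofNat, rpow_two] using (lp.memℓp f).summable (by norm_num)

theorem tsum_norm_sq (f : lp E 2) : ∑' i, ‖f i‖ ^ 2 = ‖f‖ ^ 2 := by
  simpa only [ENNReal.toReal_ofNat, rpow_two] using (lp.norm_rpow_eq_tsum (by norm_num) f).symm

theorem tsum_subtype_norm_mul_le (f : lp E 2) (s : Set ι) {g : s → ℝ} (hg : ∀ i, 0 ≤ g i)
    (hg2 : Summable fun i => g i ^ 2) :
    ∑' i : s, ‖f i‖ * g i ≤ ‖f‖ * √(∑' i : s, g i ^ 2) := by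
  refine (tsum_mul_le_sqrt_mul_sqrt (fun _ => norm_nonneg _) hg
    ((summable_norm_sq f).subtype s) hg2).trans ?_
  gcongr
  rw [← sqrt_sq (norm_nonneg f), ← tsum_norm_sq]
  gcongr
  exact (summable_norm_sq f).tsum_subtype_le _ _ fun _ => sq_nonneg _

end lp

theorem integral_Ioi_comp_add_right {E : Type*} [NormedAddCommGroup E] [NormedSpace ℝ E]
    (g : ℝ → E) (a c : ℝ) : ∫ x in Ioi a, g (x + c) = ∫ x in Ioi (a + c), g x := by
  rw [← integral_indicator measurableSet_Ioi, ← integral_indicator measurableSet_Ioi,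
    ← integral_add_right_eq_self ((Ioi (a + c)).indicator g) c]
  congr 1
  ext x
  simp only [indicator, mem_Ioi, add_lt_add_iff_right]

theorem integral_Ioi_exp_neg_sq_eq_erfc (b : ℝ) :
    ∫ t in Ioi b, exp (-t ^ 2) = √π / 2 * erfc b := by
  have : 0 < √π := sqrt_pos.2 pi_pos
  rw [erfc]
  field_simp

theorem integral_Ioi_zero_exp_neg_sq_affine {a : ℝ} (ha : 0 < a) (b : ℝ) :
    ∫ u in Ioi 0, exp (-(a * u + b) ^ 2) = a⁻¹ * (√π / 2 * erfc b) := by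
  have := integral_comp_mul_left_Ioi (fun v => exp (-(v + b) ^ 2)) 0 ha
  rw [mul_zero, integral_Ioi_comp_add_right (fun t => exp (-t ^ 2)), zero_add,
    integral_Ioi_exp_neg_sq_eq_erfc, smul_eq_mul] at this
  exact this

theorem integrable_exp_neg_sq_affine {a : ℝ} (ha : a ≠ 0) (b : ℝ) :
    Integrable fun u => exp (-(a * u + b) ^ 2) := by
  simpa only [neg_one_mul] using
    ((integrable_exp_neg_mul_sq one_pos).comp_add_right b).comp_mul_left' ha

theorem antitoneOn_exp_neg_sq_affine {a b : ℝ} (ha : 0 ≤ a) (hb : 0 ≤ b) :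
    AntitoneOn (fun u => exp (-(a * u + b) ^ 2)) (Ici 0) := by
  intro u hu v _ huv
  simp only [mem_Ici] at hu
  have h₀ : 0 ≤ a * u + b := by positivity
  have h₁ : a * u + b ≤ a * v + b := by gcongr
  exact exp_le_exp.2 (neg_le_neg (pow_le_pow_left₀ h₀ h₁ 2))

theorem summable_and_tsum_exp_neg_sq_affine_le {a b : ℝ} (ha : 0 < a) (hb : 0 ≤ b) :
    (Summable fun n : ℕ => exp (-(a * (n + 1) + b) ^ 2)) ∧
      ∑' n : ℕ, exp (-(a * (n + 1) + b) ^ 2) ≤ a⁻¹ * (√π / 2 * erfc b) := by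
  have anti := antitoneOn_exp_neg_sq_affine ha.le hb
  have int := (integrable_exp_neg_sq_affine ha.ne' b).integrableOn (s := Ioi 0)
  have nonneg : ∀ t ∈ Ioi (0 : ℝ), 0 ≤ exp (-(a * t + b) ^ 2) := fun _ _ => (exp_pos _).le
  constructor
  · exact_mod_cast (summable_nat_add_iff 1).2 (anti.summable_of_integrableOn_Ioi_zero int nonneg)
  · rw [← integral_Ioi_zero_exp_neg_sq_affine ha]
    exact_mod_cast anti.tsum_add_one_le_integral int nonneg

theorem sq_mul_abs_sub_le_of_abs_le {B ε x ξ : ℝ} (hx : |x| ≤ B) (hBξ : B ≤ |ξ|) :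
    (ε * (|ξ| - B)) ^ 2 ≤ (ε * (x - ξ)) ^ 2 := by
  have : |ξ| - B ≤ |x - ξ| := by
    have := abs_sub_abs_le_abs_sub ξ x
    rw [abs_sub_comm] at this
    linarith
  rw [mul_pow, mul_pow, ← sq_abs (x - ξ)]
  exact mul_le_mul_of_nonneg_left (pow_le_pow_left₀ (by linarith) this 2) (sq_nonneg ε)

theorem eLpNorm_exp_neg_sq_le {Ω : Set ℝ} {B ε ξ : ℝ} (hB : 0 ≤ B) (hΩ : Ω ⊆ Icc (-B) B)
    (hBξ : B ≤ |ξ|) :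
    (eLpNorm (fun x => exp (-(ε * (x - ξ)) ^ 2)) 2 (volume.restrict Ω)).toReal ≤
      √(2 * B) * exp (-(ε * (|ξ| - B)) ^ 2) := by
  have hbound : ∀ᵐ x ∂volume.restrict (Icc (-B) B),
      ‖exp (-(ε * (x - ξ)) ^ 2)‖ ≤ exp (-(ε * (|ξ| - B)) ^ 2) := by
    refine ae_restrict_of_forall_mem measurableSet_Icc fun x hx => ?_
    rw [norm_of_nonneg (exp_pos _).le]
    exact exp_le_exp.2 (neg_le_neg (sq_mul_abs_sub_le_of_abs_le (abs_le.2 hx) hBξ))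
  have hvol : volume.restrict (Icc (-B) B) univ = ENNReal.ofReal (2 * B) := by
    rw [Measure.restrict_apply_univ, volume_Icc]
    ring_nf
  refine ENNReal.toReal_le_of_le_ofReal (by positivity) ?_
  calc eLpNorm (fun x => exp (-(ε * (x - ξ)) ^ 2)) 2 (volume.restrict Ω)
      ≤ eLpNorm (fun x => exp (-(ε * (x - ξ)) ^ 2)) 2 (volume.restrict (Icc (-B) B)) :=
        eLpNorm_mono_measure _ (Measure.restrict_mono hΩ le_rfl)
    _ ≤ ENNReal.ofReal (2 * B) ^ (2 : ℝ)⁻¹ * ENNReal.ofReal (exp (-(ε * (|ξ| - B)) ^ 2)) := by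
        simpa only [hvol, ENNReal.toReal_ofNat] using eLpNorm_le_of_ae_bound (p := 2) hbound
    _ = ENNReal.ofReal (√(2 * B) * exp (-(ε * (|ξ| - B)) ^ 2)) := by
        rw [ENNReal.ofReal_rpow_of_nonneg (by positivity) (by positivity),
          ← ENNReal.ofReal_mul (by positivity), sqrt_eq_rpow, one_div]

theorem sq_sqrt_mul_eLpNorm_exp_neg_sq_le {Ω : Set ℝ} {B ε ξ : ℝ} (hB : 0 ≤ B) (hε : 0 ≤ ε)
    (hΩ : Ω ⊆ Icc (-B) B) (hBξ : B ≤ |ξ|) :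
    (√ε * (eLpNorm (fun x => exp (-(ε * (x - ξ)) ^ 2)) 2 (volume.restrict Ω)).toReal) ^ 2 ≤
      2 * B * ε * exp (-(√2 * ε * (|ξ| - B)) ^ 2) := by
  calc _ ≤ (√ε * (√(2 * B) * exp (-(ε * (|ξ| - B)) ^ 2))) ^ 2 := by
        gcongr
        exact eLpNorm_exp_neg_sq_le hB hΩ hBξ
    _ = 2 * B * ε * exp (-(√2 * ε * (|ξ| - B)) ^ 2) := by
        have h2 : (√2 * ε * (|ξ| - B)) ^ 2 = 2 * (ε * (|ξ| - B)) ^ 2 := by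
          rw [mul_pow, mul_pow, mul_pow, sq_sqrt zero_le_two]
          ring
        rw [h2, mul_pow, mul_pow, sq_sqrt hε, sq_sqrt (by positivity), ← exp_nat_mul]
        push_cast
        ring_nf

theorem sq_sqrt_mul_eLpNorm_exp_neg_sq_lattice_le {Ω : Set ℝ} {T B ε : ℝ} {N k : ℕ} {n : ℤ}
    (hT : 0 < T) (hN : 0 < N) (hB : 0 ≤ B) (hBT : B ≤ T) (hε : 0 ≤ ε) (hΩ : Ω ⊆ Icc (-B) B)
    (hn : |n| = k + N + 1) :
    (√ε * (eLpNorm (fun x => exp (-(ε * (x - n * T / N)) ^ 2)) 2 (volume.restrict Ω)).toReal) ^ 2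
      ≤ 2 * B * ε * exp (-(√2 * ε * (T / N) * (k + 1) + √2 * ε * (T - B)) ^ 2) := by
  have hNR : (0 : ℝ) < N := Nat.cast_pos.2 hN
  have hnR : |(n : ℝ)| = k + N + 1 := by exact_mod_cast hn
  have hξ : |n * T / N| = (k + N + 1) * T / N := by
    rw [abs_div, abs_mul, hnR, abs_of_pos hT, Nat.abs_cast]
  have hBξ : B ≤ |n * T / N| := by
    rw [hξ, le_div_iff₀ hNR]
    nlinarith
  convert sq_sqrt_mul_eLpNorm_exp_neg_sq_le hB hε hΩ hBξ using 5
  rw [hξ]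
  field_simp
  ring

def absGtEquiv (N : ℕ) : ℕ ⊕ ℕ ≃ {n : ℤ // (N : ℤ) < |n|} where
  toFun := Sum.elim (fun k => ⟨k + N + 1, by rw [lt_abs]; omega⟩)
    (fun k => ⟨-(k + N + 1), by rw [lt_abs]; omega⟩)
  invFun n := if 0 < n.1 then .inl (n.1 - N - 1).toNat else .inr (-n.1 - N - 1).toNat
  left_inv := by
    rintro (k | k) <;> dsimp only [Sum.elim_inl, Sum.elim_inr] <;> split_ifs <;>
      first | omega | (congr 1; omega)
  right_inv := by
    rintro ⟨n, hn⟩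
    rw [lt_abs] at hn
    dsimp only
    split_ifs <;> simp only [Sum.elim_inl, Sum.elim_inr, Subtype.mk.injEq] <;> omega

theorem summable_and_tsum_abs_gt_le {N : ℕ} {f : ℤ → ℝ} {b : ℕ → ℝ} (hf : ∀ n, 0 ≤ f n)
    (hb : Summable b) (hpos : ∀ k : ℕ, f (k + N + 1) ≤ b k)
    (hneg : ∀ k : ℕ, f (-(k + N + 1)) ≤ b k) :
    (Summable fun n : {n : ℤ // (N : ℤ) < |n|} => f n) ∧
      ∑' n : {n : ℤ // (N : ℤ) < |n|}, f n ≤ 2 * ∑' k, b k := by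
  have hinl : Summable fun k => f (absGtEquiv N (.inl k)) :=
    hb.of_nonneg_of_le (fun _ => hf _) hpos
  have hinr : Summable fun k => f (absGtEquiv N (.inr k)) :=
    hb.of_nonneg_of_le (fun _ => hf _) hneg
  have hsum : Summable fun i => f (absGtEquiv N i) := Summable.sum _ hinl hinr
  refine ⟨(absGtEquiv N).summable_iff.1 hsum, ?_⟩
  calc ∑' n : {n : ℤ // (N : ℤ) < |n|}, f n = ∑' i, f (absGtEquiv N i) :=
        ((absGtEquiv N).tsum_eq (fun n => f n)).symm
    _ = ∑' k, f (absGtEquiv N (.inl k)) + ∑' k, f (absGtEquiv N (.inr k)) :=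
        Summable.tsum_sum hinl hinr
    _ ≤ 2 * ∑' k, b k := by
        rw [two_mul]
        exact add_le_add (hinl.tsum_le_tsum hpos hb) (hinr.tsum_le_tsum hneg hb)

theorem stmt_5_general (T B ε : ℝ) (N : ℕ) (hT : 0 < T) (hB0 : 0 < B) (hBT : B < T)
    (hε : 0 < ε) (hN : 0 < N) (Ω : Set ℝ)
    (hΩ : Ω ⊆ Set.Icc (-B) B) (lam : lp (fun _ : ℤ => ℂ) 2) :
    (∑' n : {n : ℤ // (N : ℤ) < |n|},
        ‖lam (n : ℤ)‖ * Real.sqrt ε *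
          (eLpNorm (fun x => Real.exp (-(ε * (x - (n : ℤ) * T / N))^2)) 2
            (volume.restrict Ω)).toReal) ≤
      Real.sqrt (Real.sqrt (2*π) * B * N / T * erfc (Real.sqrt 2 * ε * (T - B))) * ‖lam‖ := by
  set a := √2 * ε * (T / N)
  set c := √2 * ε * (T - B)
  have ha : 0 < a := by positivity
  have hc : 0 ≤ c := mul_nonneg (by positivity) (sub_nonneg.2 hBT.le)
  obtain ⟨hexp, hexp_le⟩ := summable_and_tsum_exp_neg_sq_affine_le ha hc
  set L : ℤ → ℝ := fun n =>
    √ε * (eLpNorm (fun x => exp (-(ε * (x - n * T / N)) ^ 2)) 2 (volume.restrict Ω)).toReal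
  have hL := fun (k : ℕ) (n : ℤ) (hn : |n| = k + N + 1) =>
    sq_sqrt_mul_eLpNorm_exp_neg_sq_lattice_le hT hN hB0.le hBT.le hε.le hΩ hn
  obtain ⟨hL2, hL2_le⟩ := summable_and_tsum_abs_gt_le (f := fun n => L n ^ 2)
    (fun _ => sq_nonneg _) (hexp.mul_left (2 * B * ε))
    (fun k => hL k _ (abs_of_nonneg (by positivity)))
    (fun k => hL k _ (by rw [abs_neg, abs_of_nonneg (by positivity)]))
  have hconst : 2 * (2 * B * ε * (a⁻¹ * (√π / 2 * erfc c))) = √(2 * π) * B * N / T * erfc c := by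
    have hNR : (N : ℝ) ≠ 0 := Nat.cast_ne_zero.2 hN.ne'
    have h2 : √2 * √2 = 2 := mul_self_sqrt zero_le_two
    simp only [a]
    rw [sqrt_mul zero_le_two]
    field_simp
    linear_combination -erfc c * h2
  calc _ = ∑' n : {n : ℤ // (N : ℤ) < |n|}, ‖lam n‖ * L n := tsum_congr fun _ => mul_assoc _ _ _
    _ ≤ ‖lam‖ * √(∑' n : {n : ℤ // (N : ℤ) < |n|}, L n ^ 2) :=
        lp.tsum_subtype_norm_mul_le lam _ (fun _ => by positivity) hL2
    _ ≤ ‖lam‖ * √(√(2 * π) * B * N / T * erfc c) := by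
        grw [hL2_le, tsum_mul_left, hexp_le, hconst]
    _ = _ := mul_comm _ _

/-- tail bound for the ℓ¹-type sum of Gaussian translate norms over `|n| > N`. -/
theorem stmt_5 (T B ε : ℝ) (N : ℕ) (hT : 0 < T) (hB0 : 0 < B) (hBT : B < T)
    (hε : 0 < ε) (hN : 0 < N) (Ω : Set ℝ) (hΩmeas : MeasurableSet Ω)
    (hΩ : Ω ⊆ Set.Icc (-B) B) (lam : lp (fun _ : ℤ => ℂ) 2) :
    (∑' n : {n : ℤ // (N : ℤ) < |n|},
        ‖lam (n : ℤ)‖ * Real.sqrt ε *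
          (eLpNorm (fun x => Real.exp (-(ε * (x - (n : ℤ) * T / N))^2)) 2
            (volume.restrict Ω)).toReal) ≤
      Real.sqrt (Real.sqrt (2*π) * B * N / T * erfc (Real.sqrt 2 * ε * (T - B))) * ‖lam‖ :=
  stmt_5_general T B ε N hT hB0 hBT hε hN Ω hΩ lam
end
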